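/- For a rank-3 tensor F_{abc} with F_{abc}=−F_{bac}, F_{ab}{}^b=0 and F_{ab0}=0, the energy density T^{00} = 2(F^{0ab}F^0{}_{ab} − (1/4)η^{00}F^{eab}F_{eab}) equals Σ_{i,j} F_{0ji}F_{0ji} + (1/2)Σ_{j,k,i} F_{jki}F_{jki} (spatial indices i,j,k ∈ {1,2,3}); hence T^{00} ≥ 0, and T^{00} = 0 implies F_{abc} = 0. -/
import Mathlib


noncomputable section

/-- Minkowski metric `diag(+1,-1,-1,-1)` on `Fin 4` (same matrix raises/lowers indices). -/
def eta (a b : Fin 4) : ℝ := if a = b then (if a = 0 then 1 else -1) else 0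

/-- `F^{abc}`: all indices of `F_{abc}` raised with `η`. -/
def Fup (F : Fin 4 → Fin 4 → Fin 4 → ℝ) (a b c : Fin 4) : ℝ :=
  ∑ a' : Fin 4, ∑ b' : Fin 4, ∑ c' : Fin 4,
    eta a a' * eta b b' * eta c c' * F a' b' c'

/-- Trace `F_a = F_{ab}{}^b`. -/
def Ftrace (F : Fin 4 → Fin 4 → Fin 4 → ℝ) (a : Fin 4) : ℝ :=
  ∑ b : Fin 4, ∑ b' : Fin 4, eta b b' * F a b b'

/-- Levi-Civita symbol with upper indices, `ε^{0123} = 1`. -/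
def eps (a b c d : Fin 4) : ℝ :=
  Matrix.det (Matrix.of fun i j => if ![a, b, c, d] i = j then (1 : ℝ) else 0)

/-- `T^{cd} = 2(F^{cab}F^d{}_{ab} − (1/4)η^{cd}F^{eab}F_{eab})`. -/
def Tlg (F : Fin 4 → Fin 4 → Fin 4 → ℝ) (c d : Fin 4) : ℝ :=
  2 * ((∑ a : Fin 4, ∑ b : Fin 4, Fup F c a b * (∑ d' : Fin 4, eta d d' * F d' a b))
    - (1/4) * eta c d
        * (∑ e : Fin 4, ∑ a : Fin 4, ∑ b : Fin 4, Fup F e a b * F e a b))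

/-- Sign of a diagonal entry of `eta`. -/
def sgn (a : Fin 4) : ℝ := if a = 0 then 1 else -1

lemma eta_sum (g : Fin 4 → ℝ) (a : Fin 4) :
    ∑ a' : Fin 4, eta a a' * g a' = sgn a * g a := by
  fin_cases a <;> simp [Fin.sum_univ_four, eta, sgn]

lemma Fup_eq (F : Fin 4 → Fin 4 → Fin 4 → ℝ) (a b c : Fin 4) :
    Fup F a b c = sgn a * (sgn b * (sgn c * F a b c)) := by
  unfold Fup
  rw [show (∑ a' : Fin 4, ∑ b' : Fin 4, ∑ c' : Fin 4,
      eta a a' * eta b b' * eta c c' * F a' b' c')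
    = ∑ a' : Fin 4, eta a a' * (∑ b' : Fin 4, eta b b' *
        (∑ c' : Fin 4, eta c c' * F a' b' c')) by
      simp only [Finset.mul_sum]
      exact Finset.sum_congr rfl fun a' _ => Finset.sum_congr rfl fun b' _ =>
        Finset.sum_congr rfl fun c' _ => by ring]
  rw [eta_sum]; congr 1; rw [eta_sum]; congr 1; rw [eta_sum]

set_option maxHeartbeats 1000000 in
lemma key (F : Fin 4 → Fin 4 → Fin 4 → ℝ)
    (hanti : ∀ a b c : Fin 4, F a b c = - F b a c)
    (h0 : ∀ a b : Fin 4, F a b 0 = 0) :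
    Tlg F 0 0
        = (∑ i : Fin 3, ∑ j : Fin 3, F 0 j.succ i.succ * F 0 j.succ i.succ)
          + (1/2) * ∑ j : Fin 3, ∑ k : Fin 3, ∑ i : Fin 3,
              F j.succ k.succ i.succ * F j.succ k.succ i.succ := by
  have h00 : ∀ a c, F a a c = 0 := fun a c => by have := hanti a a c; linarith
  have s1 : (0:Fin 3).succ = (1:Fin 4) := rfl
  have s2 : (1:Fin 3).succ = (2:Fin 4) := rfl
  have s3 : (2:Fin 3).succ = (3:Fin 4) := rfl
  simp only [Tlg, Fup_eq, eta_sum, Fin.sum_univ_four, Fin.sum_univ_three, s1, s2, s3,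
    sgn, eta]
  norm_num [(by decide : (0:Fin 4) ≠ 1), (by decide : (0:Fin 4) ≠ 2),
    (by decide : (0:Fin 4) ≠ 3), (by decide : (1:Fin 4) ≠ 0),
    (by decide : (1:Fin 4) ≠ 2), (by decide : (1:Fin 4) ≠ 3),
    (by decide : (2:Fin 4) ≠ 0), (by decide : (2:Fin 4) ≠ 1),
    (by decide : (2:Fin 4) ≠ 3), (by decide : (3:Fin 4) ≠ 0),
    (by decide : (3:Fin 4) ≠ 1), (by decide : (3:Fin 4) ≠ 2),
    h0, h00, hanti 1 0, hanti 2 0, hanti 3 0,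
    hanti 2 1, hanti 3 1, hanti 3 2]
  ring

/-- the energy density
`T^{00} = Σ_{i,j} F_{0ji}F_{0ji} + (1/2)Σ_{j,k,i} F_{jki}F_{jki}` (spatial indices),
hence `T^{00} ≥ 0` and `T^{00} = 0` implies `F = 0`. -/
theorem energy_density_formula
    (F : Fin 4 → Fin 4 → Fin 4 → ℝ)
    (hanti : ∀ a b c : Fin 4, F a b c = - F b a c)
    (htr : ∀ a : Fin 4, Ftrace F a = 0)
    (h0 : ∀ a b : Fin 4, F a b 0 = 0) :
    (Tlg F 0 0
        = (∑ i : Fin 3, ∑ j : Fin 3, F 0 j.succ i.succ * F 0 j.succ i.succ)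
          + (1/2) * ∑ j : Fin 3, ∑ k : Fin 3, ∑ i : Fin 3,
              F j.succ k.succ i.succ * F j.succ k.succ i.succ)
    ∧ 0 ≤ Tlg F 0 0
    ∧ (Tlg F 0 0 = 0 → ∀ a b c : Fin 4, F a b c = 0) := by
  have h00 : ∀ a c, F a a c = 0 := fun a c => by have := hanti a a c; linarith
  have hk := key F hanti h0
  refine ⟨hk, ?_, ?_⟩
  · rw [hk]
    have hS1 : (0:ℝ) ≤ ∑ i : Fin 3, ∑ j : Fin 3,
        F 0 j.succ i.succ * F 0 j.succ i.succ :=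
      Finset.sum_nonneg fun _ _ => Finset.sum_nonneg fun _ _ => mul_self_nonneg _
    have hS2 : (0:ℝ) ≤ ∑ j : Fin 3, ∑ k : Fin 3, ∑ i : Fin 3,
        F j.succ k.succ i.succ * F j.succ k.succ i.succ :=
      Finset.sum_nonneg fun _ _ => Finset.sum_nonneg fun _ _ =>
        Finset.sum_nonneg fun _ _ => mul_self_nonneg _
    linarith
  · intro hT
    rw [hk] at hT
    set S1 := ∑ i : Fin 3, ∑ j : Fin 3, F 0 j.succ i.succ * F 0 j.succ i.succ with hS1def
    set S2 := ∑ j : Fin 3, ∑ k : Fin 3, ∑ i : Fin 3,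
        F j.succ k.succ i.succ * F j.succ k.succ i.succ with hS2def
    have hS1 : 0 ≤ S1 := Finset.sum_nonneg fun _ _ =>
      Finset.sum_nonneg fun _ _ => mul_self_nonneg _
    have hS2 : 0 ≤ S2 := Finset.sum_nonneg fun _ _ => Finset.sum_nonneg fun _ _ =>
      Finset.sum_nonneg fun _ _ => mul_self_nonneg _
    have e1 : S1 = 0 := by linarith
    have e2 : S2 = 0 := by linarith
    have hA : ∀ j i : Fin 3, F 0 j.succ i.succ = 0 := by
      intro j i
      have t1 := (Finset.sum_eq_zero_iff_of_nonneg (fun x _ =>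
        Finset.sum_nonneg fun y _ => mul_self_nonneg _)).mp e1 i (Finset.mem_univ _)
      have t2 := (Finset.sum_eq_zero_iff_of_nonneg (fun y _ =>
        mul_self_nonneg _)).mp t1 j (Finset.mem_univ _)
      exact mul_self_eq_zero.mp t2
    have hB : ∀ j k i : Fin 3, F j.succ k.succ i.succ = 0 := by
      intro j k i
      have t1 := (Finset.sum_eq_zero_iff_of_nonneg (fun x _ =>
        Finset.sum_nonneg fun y _ => Finset.sum_nonneg fun z _ =>
          mul_self_nonneg _)).mp e2 j (Finset.mem_univ _)
      have t2 := (Finset.sum_eq_zero_iff_of_nonneg (fun y _ =>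
        Finset.sum_nonneg fun z _ => mul_self_nonneg _)).mp t1 k (Finset.mem_univ _)
      have t3 := (Finset.sum_eq_zero_iff_of_nonneg (fun z _ =>
        mul_self_nonneg _)).mp t2 i (Finset.mem_univ _)
      exact mul_self_eq_zero.mp t3
    intro a b c
    have hsucc : ∀ x : Fin 4, x = 0 ∨ ∃ i : Fin 3, x = i.succ := by decide
    rcases hsucc c with rfl | ⟨i, rfl⟩
    · exact h0 a b
    rcases hsucc a with rfl | ⟨j, rfl⟩
    · rcases hsucc b with rfl | ⟨k, rfl⟩
      · exact h00 0 _
      · exact hA k i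
    · rcases hsucc b with rfl | ⟨k, rfl⟩
      · rw [hanti]; rw [hA j i]; ring
      · exact hB j k i
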